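/- Let n ∈ ℕ, m ∈ ℕ₀, M ∈ ℕ ∪ {∞} and 0 < s ≤ 1, and let (p_ε)_{ε>0} ⊆ C^{m,s}S^0_{0,0}(ℝⁿ×ℝⁿ; M) be a bounded family. Then there is a sequence ε_l → 0 and a function p: ℝⁿ×ℝⁿ → ℂ such that for all multi-indices α, β ∈ ℕ₀ⁿ with |β| ≤ m and |α| ≤ M − 1: (i) ∂_x^β ∂_ξ^α p exists and belongs to C^{0,s}(ℝⁿ×ℝⁿ); (ii) ∂_x^β ∂_ξ^α p_{ε_l} → ∂_x^β ∂_ξ^α p uniformly on every compact subset of ℝⁿ×ℝⁿ as l → ∞. In particular p ∈ C^{m,s}S^0_{0,0}(ℝⁿ×ℝⁿ; M−1). -/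

import Mathlib

open MeasureTheory Filter Topology Complex
open scoped RealInnerProductSpace ENNReal NNReal

set_option synthInstance.maxHeartbeats 1000000
noncomputable section

/-! ## Basic setup -/

abbrev En (n : ℕ) : Type := EuclideanSpace ℝ (Fin n)
abbrev Sch (n : ℕ) : Type := SchwartzMap (En n) ℂ

/-- `|α| = ∑ j α j` for a multi-index `α`. -/
def mdeg {n : ℕ} (α : Fin n → ℕ) : ℕ := ∑ j, α j

def esingle {n : ℕ} (j : Fin n) : En n := EuclideanSpace.single j (1 : ℝ)

/-- directional derivative `∂_v` (Gâteaux along `v`, via the Fréchet derivative). -/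
def pdVec {V : Type*} [NormedAddCommGroup V] [NormedSpace ℝ V] (v : V) (f : V → ℂ) : V → ℂ :=
  fun x => fderiv ℝ f x v

/-- iterated directional derivative `∂^α` with respect to the family of directions `bas`. -/
def pdMultiG {V : Type*} [NormedAddCommGroup V] [NormedSpace ℝ V] {N : ℕ}
    (bas : Fin N → V) (α : Fin N → ℕ) (f : V → ℂ) : V → ℂ :=
  (List.finRange N).foldr (fun j g => (pdVec (bas j))^[α j] g) f

/-- coordinate partial derivative `∂_{x_j}` on `ℝⁿ`. -/
def pdCoord {n : ℕ} (j : Fin n) (f : En n → ℂ) : En n → ℂ := pdVec (esingle j) f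

/-- iterated partial derivative `∂^α` on `ℝⁿ`. -/
def pdMulti {n : ℕ} (α : Fin n → ℕ) (f : En n → ℂ) : En n → ℂ :=
  pdMultiG (fun j : Fin n => esingle j) α f

/-- the Japanese bracket `⟨ξ⟩ = (1+|ξ|²)^{1/2}`. -/
def jb {n : ℕ} (ξ : En n) : ℝ := Real.sqrt (1 + ‖ξ‖ ^ 2)

/-- comparison `r ≤ N` of a real number with an extended natural number. -/
def leReal (r : ℝ) (N : ℕ∞) : Prop := ∀ k : ℕ, N = (k : ℕ∞) → r ≤ (k : ℝ)

/-! ## Symbol classes `C^{mt,s} S^m_{ρ,0}(ℝⁿ×ℝⁿ; M)` -/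

/-- `∂_ξ^α p(x,ξ)`. -/
def dXi {n : ℕ} (α : Fin n → ℕ) (p : En n → En n → ℂ) : En n → En n → ℂ :=
  fun x ξ => pdMulti α (p x) ξ

/-- `∂_x^β p(x,ξ)`. -/
def dX {n : ℕ} (β : Fin n → ℕ) (p : En n → En n → ℂ) : En n → En n → ℂ :=
  fun x ξ => pdMulti β (fun x' => p x' ξ) x

/-- `∂_x^β ∂_ξ^α p(x,ξ)`. -/
def mixD {n : ℕ} (α β : Fin n → ℕ) (p : En n → En n → ℂ) : En n → En n → ℂ :=
  dX β (dXi α p)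

/-- Membership in the symbol class `C^{mt,s} S^m_{ρ,0}(ℝⁿ×ℝⁿ; M)` with constants `C α`:
all derivatives `∂_x^β ∂_ξ^α p` with `|α| ≤ M`, `|β| ≤ mt` exist, are (jointly) continuous and
`‖∂_ξ^α p(·,ξ)‖_{C^{mt,s}} ≤ C α ⟨ξ⟩^{m-ρ|α|}`. -/
def SymWC (n mt : ℕ) (s m ρ : ℝ) (M : ℕ∞) (p : En n → En n → ℂ)
    (C : (Fin n → ℕ) → ℝ) : Prop :=
  (∀ α : Fin n → ℕ, ((mdeg α + 1 : ℕ) : ℕ∞) ≤ M → ∀ x : En n,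
      Differentiable ℝ (fun ξ => dXi α p x ξ)) ∧
  (∀ α β : Fin n → ℕ, ((mdeg α : ℕ) : ℕ∞) ≤ M → mdeg β + 1 ≤ mt → ∀ ξ : En n,
      Differentiable ℝ (fun x => mixD α β p x ξ)) ∧
  (∀ α β : Fin n → ℕ, ((mdeg α : ℕ) : ℕ∞) ≤ M → mdeg β ≤ mt →
      Continuous (fun z : En n × En n => mixD α β p z.1 z.2)) ∧
  (∀ α : Fin n → ℕ, ((mdeg α : ℕ) : ℕ∞) ≤ M →
    (∀ β : Fin n → ℕ, mdeg β ≤ mt → ∀ x ξ : En n,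
        ‖mixD α β p x ξ‖ ≤ C α * jb ξ ^ (m - ρ * mdeg α)) ∧
    (∀ β : Fin n → ℕ, mdeg β = mt → ∀ x y ξ : En n,
        ‖mixD α β p x ξ - mixD α β p y ξ‖ ≤ C α * jb ξ ^ (m - ρ * mdeg α) * ‖x - y‖ ^ s))

/-- The symbol class `C^{mt,s} S^m_{ρ,0}(ℝⁿ×ℝⁿ; M)`. -/
def SymClass (n mt : ℕ) (s m ρ : ℝ) (M : ℕ∞) (p : En n → En n → ℂ) : Prop :=
  ∃ C, SymWC n mt s m ρ M p C

/-! ## Fourier transform, pseudodifferential and Bessel potential operators -/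

/-- Fourier transform `û(ξ) = ∫ e^{-i x·ξ} u(x) dx`. -/
def fourierT (n : ℕ) (u : En n → ℂ) (ξ : En n) : ℂ :=
  ∫ x : En n, Complex.exp (-Complex.I * (⟪x, ξ⟫ : ℂ)) * u x

/-- The pseudodifferential operator `p(x,D_x)u(x) = ∫ e^{i x·ξ} p(x,ξ) û(ξ) đξ`. -/
def psiOpF (n : ℕ) (p : En n → En n → ℂ) (u : En n → ℂ) (x : En n) : ℂ :=
  ((2 * Real.pi) ^ n : ℝ)⁻¹ •
    ∫ ξ : En n, Complex.exp (Complex.I * (⟪x, ξ⟫ : ℂ)) * p x ξ * fourierT n u ξ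

/-- `⟨D_x⟩^s u (x) = ∫ e^{ix·ξ} ⟨ξ⟩^s û(ξ) đξ`. -/
def besselF (n : ℕ) (s : ℝ) (u : En n → ℂ) (x : En n) : ℂ :=
  ((2 * Real.pi) ^ n : ℝ)⁻¹ •
    ∫ ξ : En n, Complex.exp (Complex.I * (⟪x, ξ⟫ : ℂ)) * ((jb ξ ^ s : ℝ) : ℂ) * fourierT n u ξ

/-- The `H^s_q`-norm of a function, `‖⟨D⟩^s f‖_{L^q}`. -/
def HsNormS (n : ℕ) (s q : ℝ) (u : En n → ℂ) : ℝ≥0∞ :=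
  eLpNorm (besselF n s u) (ENNReal.ofReal q) volume

/-- `h` is a representative of `⟨D⟩^t g` lying in `L^q`; this expresses `g ∈ H^t_q` weakly. -/
def HsPair (n : ℕ) (t q : ℝ) (g h : En n → ℂ) : Prop :=
  MemLp h (ENNReal.ofReal q) volume ∧
  ∀ φ : Sch n, Integrable (fun x => g x * besselF n t (⇑φ) x) volume ∧
    ∫ x, g x * besselF n t (⇑φ) x = ∫ x, h x * φ x

/-! ## Multiplication by coordinates, `D_j`, commutators -/

/-- multiplication by the coordinate `x j`, as a continuous `ℝ`-linear map on Schwartz space. -/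
def MxR (n : ℕ) (j : Fin n) : Sch n →L[ℝ] Sch n :=
  SchwartzMap.bilinLeftCLM ((ContinuousLinearMap.lsmul ℝ ℝ : ℝ →L[ℝ] ℂ →L[ℝ] ℂ).flip)
    ((EuclideanSpace.proj j : En n →L[ℝ] ℝ).hasTemperateGrowth)

/-- multiplication by the coordinate `x j`, as a continuous `ℂ`-linear map on Schwartz space. -/
def MxC (n : ℕ) (j : Fin n) : Sch n →L[ℂ] Sch n :=
  { toFun := fun f => MxR n j f
    map_add' := fun f g => map_add _ f g
    map_smul' := by
      intro c f
      ext x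
      show (x j : ℝ) • ((c • f) x) = (c • (MxR n j f)) x
      show (x j : ℝ) • (c • f x) = c • ((x j : ℝ) • f x)
      rw [smul_comm]
    cont := (MxR n j).continuous }

/-- `D_j = -i ∂_j` on Schwartz functions, as a continuous `ℂ`-linear map. -/
def DjCLM (n : ℕ) (j : Fin n) : Sch n →L[ℂ] Sch n :=
  (-Complex.I : ℂ) • (SchwartzMap.evalCLM ℂ (En n) ℂ (esingle j) ∘L SchwartzMap.fderivCLM ℂ (En n) ℂ : Sch n →L[ℂ] Sch n)

/-- `ad(-i x_j) A` for an operator `A` on Schwartz functions. -/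
def adXOp (n : ℕ) (j : Fin n) (A : Sch n → En n → ℂ) : Sch n → En n → ℂ :=
  fun u x => -Complex.I * (x j : ℂ) * A u x + A (Complex.I • MxC n j u) x

/-- `ad(D_j) A` for an operator `A` on Schwartz functions. -/
def adDOp (n : ℕ) (j : Fin n) (A : Sch n → En n → ℂ) : Sch n → En n → ℂ :=
  fun u x => -Complex.I * fderiv ℝ (A u) x (esingle j) - A (DjCLM n j u) x

def adElem (n : ℕ) : Fin n ⊕ Fin n → (Sch n → En n → ℂ) → Sch n → En n → ℂ
  | Sum.inl j => adXOp n j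
  | Sum.inr j => adDOp n j

/-- iterated commutator along a list of elementary commutators. -/
def adListOp (n : ℕ) (L : List (Fin n ⊕ Fin n)) (A : Sch n → En n → ℂ) : Sch n → En n → ℂ :=
  L.foldr (adElem n) A

/-- number of factors `ad(-i x_j)` in the list. -/
def nXc {n : ℕ} (L : List (Fin n ⊕ Fin n)) : ℕ := L.countP Sum.isLeft
/-- number of factors `ad(D_j)` in the list. -/
def nDc {n : ℕ} (L : List (Fin n ⊕ Fin n)) : ℕ := L.countP Sum.isRight

/-- The set `𝓐^{m,M}_{ρ,0}(mt,q)`: `P` is linear, bounded from `H^m_q` to `L^q`, and all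
iterated commutators `ad(-ix)^α ad(D_x)^β P` with `|α| ≤ M`, `|β| ≤ mt` are bounded from
`H^{m-ρ|α|}_q` to `L^q`. -/
def memA (n : ℕ) (m : ℝ) (M mt : ℕ∞) (q ρ : ℝ) (P : Sch n → En n → ℂ) : Prop :=
  (∀ u v : Sch n, P (u + v) = fun x => P u x + P v x) ∧
  (∀ (c : ℂ) (u : Sch n), P (c • u) = fun x => c * P u x) ∧
  ∀ L : List (Fin n ⊕ Fin n),
    ((nXc L : ℕ) : ℕ∞) ≤ M → ((nDc L : ℕ) : ℕ∞) ≤ mt →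
    ∃ C : ℝ, ∀ u : Sch n,
      eLpNorm (adListOp n L P u) (ENNReal.ofReal q) volume ≤
        ENNReal.ofReal C * HsNormS n (m - ρ * (nXc L : ℕ)) q ⇑u

/-! ## Oscillatory integrals -/

/-- the regularized integral `(2π)^{-d} ∬ χ(εy,εη) e^{-i B(y,η)} a(y,η) dy dη`. -/
def oscP {V : Type*} [NormedAddCommGroup V] [NormedSpace ℝ V] [MeasureSpace V]
    (d : ℕ) (B : V → V → ℝ) (a : V → V → ℂ) (χ : SchwartzMap (V × V) ℂ) (ε : ℝ) : ℂ :=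
  ((2 * Real.pi) ^ d : ℝ)⁻¹ •
    ∫ z : V × V, χ (ε • z) * Complex.exp (-Complex.I * (B z.1 z.2 : ℂ)) * a z.1 z.2

/-- `I` is the oscillatory integral `Os-∬ e^{-iB(y,η)} a(y,η) dy đη`: for every Schwartz `χ`
with `χ(0)=1` the regularized integrals converge to `I` as `ε → 0⁺`. -/
def IsOsc {V : Type*} [NormedAddCommGroup V] [NormedSpace ℝ V] [MeasureSpace V]
    (d : ℕ) (B : V → V → ℝ) (a : V → V → ℂ) (I : ℂ) : Prop :=
  ∀ χ : SchwartzMap (V × V) ℂ, χ 0 = 1 →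
    Tendsto (fun ε : ℝ => oscP d B a χ ε) (𝓝[>] (0 : ℝ)) (𝓝 I)

/-- the standard pairing `y·η` on `ℝⁿ`. -/
def BE (n : ℕ) : En n → En n → ℝ := fun y η => ⟪y, η⟫

/-- the pairing `y·ξ + y'·ξ'` on `ℝⁿ × ℝⁿ`. -/
def B4 (n : ℕ) : En n × En n → En n × En n → ℝ := fun Y Ξ => ⟪Y.1, Ξ.1⟫ + ⟪Y.2, Ξ.2⟫

/-- the pairing on `ℝⁿ × ℝᵏ`. -/
def Bprod (n k : ℕ) : En n × En k → En n × En k → ℝ := fun Y H => ⟪Y.1, H.1⟫ + ⟪Y.2, H.2⟫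

/-! ## Amplitudes -/

/-- `∂_y^β a(y,η)` (generic version). -/
def dYampG {V : Type*} [NormedAddCommGroup V] [NormedSpace ℝ V] {Nd : ℕ} (bas : Fin Nd → V)
    (β : Fin Nd → ℕ) (a : V → V → ℂ) : V → V → ℂ :=
  fun y η => pdMultiG bas β (fun y' => a y' η) y

/-- `∂_η^α ∂_y^β a(y,η)` (generic version). -/
def mixAmpG {V : Type*} [NormedAddCommGroup V] [NormedSpace ℝ V] {Nd : ℕ} (bas : Fin Nd → V)
    (α β : Fin Nd → ℕ) (a : V → V → ℂ) : V → V → ℂ :=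
  fun y η => pdMultiG bas α (fun η' => dYampG bas β a y η') η

/-- The amplitude class `𝓐^{m,N}_τ` with constants `C α β`. -/
def AmpWCG {V : Type*} [NormedAddCommGroup V] [NormedSpace ℝ V] {Nd : ℕ} (bas : Fin Nd → V)
    (m τ : ℝ) (N : ℕ∞) (a : V → V → ℂ) (C : (Fin Nd → ℕ) → (Fin Nd → ℕ) → ℝ) : Prop :=
  (∀ (β : Fin Nd → ℕ) (η : V), Differentiable ℝ (fun y => dYampG bas β a y η)) ∧
  (∀ α β : Fin Nd → ℕ, ((mdeg α + 1 : ℕ) : ℕ∞) ≤ N → ∀ y : V,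
      Differentiable ℝ (fun η => mixAmpG bas α β a y η)) ∧
  (∀ α β : Fin Nd → ℕ, ((mdeg α : ℕ) : ℕ∞) ≤ N →
      Continuous (fun z : V × V => mixAmpG bas α β a z.1 z.2)) ∧
  (∀ α β : Fin Nd → ℕ, ((mdeg α : ℕ) : ℕ∞) ≤ N → ∀ y η : V,
      ‖mixAmpG bas α β a y η‖ ≤ C α β * (1 + ‖η‖) ^ m * (1 + ‖y‖) ^ τ)

/-- The amplitude class `𝓐^{m,N}_τ` (generic version). -/
def AmpG {V : Type*} [NormedAddCommGroup V] [NormedSpace ℝ V] {Nd : ℕ} (bas : Fin Nd → V)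
    (m τ : ℝ) (N : ℕ∞) (a : V → V → ℂ) : Prop :=
  ∃ C, AmpWCG bas m τ N a C

/-- `∂_η^α ∂_y^β a(y,η)` on `ℝⁿ`. -/
def mixAmp {n : ℕ} (α β : Fin n → ℕ) (a : En n → En n → ℂ) : En n → En n → ℂ :=
  mixAmpG (fun j : Fin n => esingle j) α β a

/-- The amplitude class `𝓐^{m,N}_τ(ℝⁿ×ℝⁿ)` with constants `C α β`. -/
def AmpWC (n : ℕ) (m τ : ℝ) (N : ℕ∞) (a : En n → En n → ℂ)
    (C : (Fin n → ℕ) → (Fin n → ℕ) → ℝ) : Prop :=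
  AmpWCG (fun j : Fin n => esingle j) m τ N a C

/-- The amplitude class `𝓐^{m,N}_τ(ℝⁿ×ℝⁿ)`. -/
def Amp (n : ℕ) (m τ : ℝ) (N : ℕ∞) (a : En n → En n → ℂ) : Prop := ∃ C, AmpWC n m τ N a C

/-! ## The operators `A^l(D_y, η)` -/

/-- `D_j = -i∂_j` on functions. -/
def DyC {n : ℕ} (j : Fin n) (f : En n → ℂ) : En n → ℂ := fun y => -Complex.I * pdCoord j f y

/-- `(1 - Δ) f`. -/
def oneSubLap {n : ℕ} (f : En n → ℂ) : En n → ℂ :=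
  fun y => f y - ∑ j : Fin n, pdCoord j (pdCoord j f) y

/-- `⟨D_y⟩^{2k} = (1-Δ)^k`. -/
def besselD {n : ℕ} (k : ℕ) (f : En n → ℂ) : En n → ℂ := oneSubLap^[k] f

/-- `A^l(D_y,η)`, acting on functions `a(y,η)` by differentiating in `y` with weights in `η`. -/
def AopY (n : ℕ) (l : ℕ) (a : En n → En n → ℂ) : En n → En n → ℂ :=
  if l = 0 then a
  else if l % 2 = 0 then
    fun y η => ((jb η ^ (-(l : ℝ)) : ℝ) : ℂ) * besselD (l / 2) (fun y' => a y' η) y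
  else
    fun y η =>
      ((jb η ^ (-(l : ℝ) - 1) : ℝ) : ℂ) * besselD ((l - 1) / 2) (fun y' => a y' η) y -
      ∑ j : Fin n, ((jb η ^ (-(l : ℝ)) : ℝ) : ℂ) * ((η j / jb η : ℝ) : ℂ) *
        besselD ((l - 1) / 2) (DyC j (fun y' => a y' η)) y

/-- `A^l(D_η,y)`, acting on functions `a(y,η)` by differentiating in `η` with weights in `y`. -/
def AopEta (n : ℕ) (l : ℕ) (a : En n → En n → ℂ) : En n → En n → ℂ :=
  fun y η => AopY n l (Function.swap a) η y

/-! ## Triple and double (quadruple-variable) symbols -/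

/-- `∂_{x'}^{β'} a(x,ξ,x')`. -/
def d3X' {n : ℕ} (β' : Fin n → ℕ) (a : En n → En n → En n → ℂ) : En n → En n → En n → ℂ :=
  fun x ξ x' => pdMulti β' (fun t => a x ξ t) x'

/-- `∂_ξ^α a(x,ξ,x')`. -/
def d3Xi {n : ℕ} (α : Fin n → ℕ) (a : En n → En n → En n → ℂ) : En n → En n → En n → ℂ :=
  fun x ξ x' => pdMulti α (fun t => a x t x') ξ

/-- `∂_x^β ∂_ξ^α ∂_{x'}^{β'} a(x,ξ,x')`. -/
def d3mix {n : ℕ} (α β β' : Fin n → ℕ) (a : En n → En n → En n → ℂ) :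
    En n → En n → En n → ℂ :=
  fun x ξ x' => pdMulti β (fun t => d3Xi α (d3X' β' a) t ξ x') x

/-- The symbol class `C^{mt,s} S^m_{0,0}(ℝⁿ×ℝⁿ×ℝⁿ; N)` with constants `C α β'`. -/
def TripWC (n mt : ℕ) (s m : ℝ) (N : ℕ∞) (a : En n → En n → En n → ℂ)
    (C : (Fin n → ℕ) → (Fin n → ℕ) → ℝ) : Prop :=
  (∀ (β' : Fin n → ℕ) (x ξ : En n), Differentiable ℝ (fun x' => d3X' β' a x ξ x')) ∧
  (∀ α β' : Fin n → ℕ, ((mdeg α + 1 : ℕ) : ℕ∞) ≤ N → ∀ x x' : En n,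
      Differentiable ℝ (fun ξ => d3Xi α (d3X' β' a) x ξ x')) ∧
  (∀ α β β' : Fin n → ℕ, ((mdeg α : ℕ) : ℕ∞) ≤ N → mdeg β + 1 ≤ mt → ∀ ξ x' : En n,
      Differentiable ℝ (fun x => d3mix α β β' a x ξ x')) ∧
  (∀ α β β' : Fin n → ℕ, ((mdeg α : ℕ) : ℕ∞) ≤ N → mdeg β ≤ mt →
      Continuous (fun z : En n × En n × En n => d3mix α β β' a z.1 z.2.1 z.2.2)) ∧
  (∀ α β' : Fin n → ℕ, ((mdeg α : ℕ) : ℕ∞) ≤ N →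
    (∀ β : Fin n → ℕ, mdeg β ≤ mt → ∀ x ξ x' : En n,
        ‖d3mix α β β' a x ξ x'‖ ≤ C α β' * jb ξ ^ m) ∧
    (∀ β : Fin n → ℕ, mdeg β = mt → ∀ x y ξ x' : En n,
        ‖d3mix α β β' a x ξ x' - d3mix α β β' a y ξ x'‖ ≤ C α β' * jb ξ ^ m * ‖x - y‖ ^ s))

/-- The symbol class `C^{mt,s} S^m_{0,0}(ℝⁿ×ℝⁿ×ℝⁿ; N)`. -/
def TripClass (n mt : ℕ) (s m : ℝ) (N : ℕ∞) (a : En n → En n → En n → ℂ) : Prop :=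
  ∃ C, TripWC n mt s m N a C

/-- `v` is the value of `a(x,D_x,x')u(x)`, defined by the fourfold oscillatory integral
`Os-⨌ e^{-i(y·ξ+y'·ξ')} a(x,ξ,x+y)u(x+y+y') dy dy' đξ đξ'`. -/
def OpVal3 (n : ℕ) (a : En n → En n → En n → ℂ) (u : En n → ℂ) (x : En n) (v : ℂ) : Prop :=
  IsOsc (2 * n) (B4 n) (fun Y Ξ => a x Ξ.1 (x + Y.1) * u (x + Y.1 + Y.2)) v

/-- `∂_x^β ∂_ξ^α ∂_{x'}^{β'} ∂_{ξ'}^{α'} p(x,ξ,x',ξ')`. -/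
def d4mix {n : ℕ} (α β α' β' : Fin n → ℕ) (p : En n → En n → En n → En n → ℂ) :
    En n → En n → En n → En n → ℂ :=
  fun x ξ x' ξ' =>
    pdMulti β (fun t =>
      pdMulti α (fun u' =>
        pdMulti β' (fun r =>
          pdMulti α' (fun w => p t u' r w) ξ') x') ξ) x

/-- partial versions used for stating differentiability of the stages. -/
def d4a {n : ℕ} (α' : Fin n → ℕ) (p : En n → En n → En n → En n → ℂ) :
    En n → En n → En n → En n → ℂ :=
  fun x ξ x' ξ' => pdMulti α' (fun w => p x ξ x' w) ξ'

def d4b {n : ℕ} (α' β' : Fin n → ℕ) (p : En n → En n → En n → En n → ℂ) :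
    En n → En n → En n → En n → ℂ :=
  fun x ξ x' ξ' => pdMulti β' (fun r => d4a α' p x ξ r ξ') x'

def d4c {n : ℕ} (α α' β' : Fin n → ℕ) (p : En n → En n → En n → En n → ℂ) :
    En n → En n → En n → En n → ℂ :=
  fun x ξ x' ξ' => pdMulti α (fun u' => d4b α' β' p x u' x' ξ') ξ

/-- The double symbol class `C^{mt,s} S^{m,m'}_{0,0}(ℝⁿ×ℝⁿ×ℝⁿ×ℝⁿ; N)` with constants. -/
def QuadWC (n mt : ℕ) (s m m' : ℝ) (N : ℕ∞) (p : En n → En n → En n → En n → ℂ)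
    (C : (Fin n → ℕ) → (Fin n → ℕ) → (Fin n → ℕ) → ℝ) : Prop :=
  (∀ (α' : Fin n → ℕ) (x ξ x' : En n), Differentiable ℝ (fun ξ' => d4a α' p x ξ x' ξ')) ∧
  (∀ (α' β' : Fin n → ℕ) (x ξ ξ' : En n), Differentiable ℝ (fun x' => d4b α' β' p x ξ x' ξ')) ∧
  (∀ α α' β' : Fin n → ℕ, ((mdeg α + 1 : ℕ) : ℕ∞) ≤ N → ∀ x x' ξ' : En n,
      Differentiable ℝ (fun ξ => d4c α α' β' p x ξ x' ξ')) ∧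
  (∀ α β α' β' : Fin n → ℕ, ((mdeg α : ℕ) : ℕ∞) ≤ N → mdeg β + 1 ≤ mt → ∀ ξ x' ξ' : En n,
      Differentiable ℝ (fun x => d4mix α β α' β' p x ξ x' ξ')) ∧
  (∀ α β α' β' : Fin n → ℕ, ((mdeg α : ℕ) : ℕ∞) ≤ N → mdeg β ≤ mt →
      Continuous (fun z : (En n × En n) × En n × En n =>
        d4mix α β α' β' p z.1.1 z.1.2 z.2.1 z.2.2)) ∧
  (∀ α α' β' : Fin n → ℕ, ((mdeg α : ℕ) : ℕ∞) ≤ N →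
    (∀ β : Fin n → ℕ, mdeg β ≤ mt → ∀ x ξ x' ξ' : En n,
        ‖d4mix α β α' β' p x ξ x' ξ'‖ ≤ C α β' α' * jb ξ ^ m * jb ξ' ^ m') ∧
    (∀ β : Fin n → ℕ, mdeg β = mt → ∀ x y ξ x' ξ' : En n,
        ‖d4mix α β α' β' p x ξ x' ξ' - d4mix α β α' β' p y ξ x' ξ'‖ ≤
          C α β' α' * jb ξ ^ m * jb ξ' ^ m' * ‖x - y‖ ^ s))

/-- `v` is the value of `p(x,D_x,x',D_{x'})u(x)`, defined by the fourfold oscillatory integral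
`Os-⨌ e^{-i(y·ξ+y'·ξ')} p(x,ξ,x+y,ξ')u(x+y+y') dy dy' đξ đξ'`. -/
def OpVal4 (n : ℕ) (p : En n → En n → En n → En n → ℂ) (u : En n → ℂ) (x : En n) (v : ℂ) :
    Prop :=
  IsOsc (2 * n) (B4 n) (fun Y Ξ => p x Ξ.1 (x + Y.1) Ξ.2 * u (x + Y.1 + Y.2)) v

/-! ## Tempered distributions -/

/-- The space of (complex) tempered distributions `𝓢'(ℝⁿ)`. -/
abbrev TDist (n : ℕ) := Sch n →L[ℂ] ℂ

/-- multiplication of a tempered distribution by `x_j`. -/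
def distMx (n : ℕ) (j : Fin n) (u : TDist n) : TDist n := u.comp (MxC n j)

/-- `D_j` of a tempered distribution: `⟨D_j u, φ⟩ = -⟨u, D_j φ⟩`. -/
def distDj (n : ℕ) (j : Fin n) (u : TDist n) : TDist n := -(u.comp (DjCLM n j))

/-- `ad(-i x_j) A` for an operator `A` on tempered distributions. -/
def adX' (n : ℕ) (j : Fin n) (A : TDist n → En n → ℂ) : TDist n → En n → ℂ :=
  fun u x => -Complex.I * (x j : ℂ) * A u x + A (Complex.I • distMx n j u) x

/-- `ad(D_j) A` for an operator `A` on tempered distributions. -/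
def adD' (n : ℕ) (j : Fin n) (A : TDist n → En n → ℂ) : TDist n → En n → ℂ :=
  fun u x => -Complex.I * fderiv ℝ (A u) x (esingle j) - A (distDj n j u) x

/-- `ad(-ix)^α A`. -/
def adXmulti (n : ℕ) (α : Fin n → ℕ) (A : TDist n → En n → ℂ) : TDist n → En n → ℂ :=
  (List.finRange n).foldr (fun j B => (adX' n j)^[α j] B) A

/-- `ad(D_x)^β A`. -/
def adDmulti (n : ℕ) (β : Fin n → ℕ) (A : TDist n → En n → ℂ) : TDist n → En n → ℂ :=
  (List.finRange n).foldr (fun j B => (adD' n j)^[β j] B) A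

/-- the iterated commutator `ad(-ix)^α ad(D_x)^β A`. -/
def adIter (n : ℕ) (α β : Fin n → ℕ) (A : TDist n → En n → ℂ) : TDist n → En n → ℂ :=
  adXmulti n α (adDmulti n β A)

/-- `∂^β` on Schwartz functions (as Schwartz functions). -/
def sPDmulti (n : ℕ) (β : Fin n → ℕ) (f : Sch n) : Sch n :=
  (List.finRange n).foldr (fun j g => (fun h : Sch n => (SchwartzMap.evalCLM ℂ (En n) ℂ (esingle j) ∘L SchwartzMap.fderivCLM ℂ (En n) ℂ : Sch n →L[ℂ] Sch n) h)^[β j] g) f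

/-- `D^β = (-i)^{|β|} ∂^β` on Schwartz functions. -/
def sDm (n : ℕ) (β : Fin n → ℕ) (f : Sch n) : Sch n :=
  ((-Complex.I) ^ (mdeg β)) • sPDmulti n β f


/-- the canonical "basis" directions of `ℝⁿ × ℝᵏ`. -/
def pbas (n k : ℕ) : Fin (n + k) → En n × En k :=
  Fin.addCases (fun j => (esingle j, 0)) (fun j => (0, esingle j))

end

/-! A bounded family of symbols is uniformly bounded and uniformly Hölder continuous, jointly in
`(x, ξ)`, in every derivative `∂_x^β ∂_ξ^α` with `|α| ≤ M - 1` and `|β| ≤ m`: in `x` by the symbol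
estimates, in `ξ` because one more `ξ`-derivative is still bounded. Tychonoff's theorem applied to
the values at a countable dense set of points, for all multi-indices at once, yields one
subsequence along which all these derivatives converge on the dense set, and equicontinuity
upgrades this to locally uniform convergence. Locally uniform limits of derivatives are
derivatives of the limit, so the limits are the derivatives of `q = lim p_{ε_l}`, and the
estimates pass to the limit. -/

section MultiIndex
variable {n : ℕ}

lemma mdeg_zero : mdeg (0 : Fin n → ℕ) = 0 := by simp [mdeg]

lemma mdeg_add (γ γ' : Fin n → ℕ) : mdeg (γ + γ') = mdeg γ + mdeg γ' :=
  Finset.sum_add_distrib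

lemma mdeg_add_single (γ : Fin n → ℕ) (j : Fin n) : mdeg (γ + Pi.single j 1) = mdeg γ + 1 := by
  rw [mdeg_add]
  simp [mdeg]

/-- Splitting off `e_j` with `j` below the support of the rest is the decomposition in which
`pdMulti` peels off its outermost derivative. -/
theorem MultiIndex.induction {P : (Fin n → ℕ) → Prop} (zero : P 0)
    (add_single : ∀ γ j, (∀ i < j, γ i = 0) → P γ → P (γ + Pi.single j 1)) (γ : Fin n → ℕ) :
    P γ := by
  induction h : mdeg γ generalizing γ with
  | zero =>
    obtain rfl : γ = 0 := funext fun i => Finset.sum_eq_zero_iff.mp h i (Finset.mem_univ i)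
    exact zero
  | succ d ih =>
    obtain ⟨i, hi⟩ : ∃ i, γ i ≠ 0 := by
      by_contra! h0
      simp [mdeg, h0] at h
    obtain ⟨j, hj, hmin⟩ := WellFounded.has_min wellFounded_lt {i | γ i ≠ 0} ⟨i, hi⟩
    have hγ : γ = Function.update γ j (γ j - 1) + Pi.single j 1 := by
      ext i
      by_cases hij : i = j
      · subst hij
        simp only [Function.update_self, Pi.add_apply, Pi.single_eq_same]
        exact (Nat.sub_add_cancel (Nat.one_le_iff_ne_zero.mpr hj)).symm
      · simp [hij]
    rw [hγ] at h ⊢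
    refine add_single _ j (fun i hij => ?_) (ih _ (by rw [mdeg_add_single] at h; omega))
    rw [Function.update_of_ne hij.ne]
    by_contra hne
    exact hmin i hne hij

lemma ENat.natCast_add_one_le_of_le_sub_one {M : ℕ∞} (hM : 1 ≤ M) {a : ℕ}
    (h : (a : ℕ∞) ≤ M - 1) : ((a + 1 : ℕ) : ℕ∞) ≤ M := by
  push_cast
  exact ((ENat.addLECancellable_of_ne_top ENat.one_ne_top).le_tsub_iff_right hM).mp h

end MultiIndex

section IteratedFoldr
variable {n : ℕ} {A : Type*} (T : Fin n → A → A)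

lemma foldr_iterate_congr {γ γ' : Fin n → ℕ} (f : A) {L : List (Fin n)}
    (h : ∀ i ∈ L, γ i = γ' i) :
    L.foldr (fun j g => (T j)^[γ j] g) f = L.foldr (fun j g => (T j)^[γ' j] g) f := by
  induction L with
  | nil => rfl
  | cons a L ih =>
    simp only [List.foldr_cons, h a List.mem_cons_self,
      ih fun i hi => h i (List.mem_cons_of_mem a hi)]

lemma foldr_iterate_zero (f : A) (L : List (Fin n)) :
    L.foldr (fun j g => (T j)^[(0 : Fin n → ℕ) j] g) f = f := by
  simp

lemma foldr_iterate_add_single {γ : Fin n → ℕ} (f : A) {j : Fin n} {L : List (Fin n)}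
    (hL : L.Pairwise (· < ·)) (hj : j ∈ L) (h : ∀ i ∈ L, i < j → γ i = 0) :
    L.foldr (fun i g => (T i)^[(γ + Pi.single j 1 : Fin n → ℕ) i] g) f
      = T j (L.foldr (fun i g => (T i)^[γ i] g) f) := by
  induction L with
  | nil => cases hj
  | cons a L ih =>
    obtain ⟨ha, hL⟩ := List.pairwise_cons.mp hL
    rcases eq_or_ne j a with rfl | hja
    · have hrest : ∀ i ∈ L, (γ + Pi.single j 1 : Fin n → ℕ) i = γ i := fun i hi => by
        simp [Pi.single_eq_of_ne (ha i hi).ne']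
      simp only [List.foldr_cons]
      rw [foldr_iterate_congr T f hrest]
      simp [Function.iterate_succ_apply']
    · have hjL : j ∈ L := (List.mem_cons.mp hj).resolve_left hja
      have haj : a < j := ha j hjL
      have hγa : γ a = 0 := h a List.mem_cons_self haj
      simp only [List.foldr_cons, Pi.add_apply, hγa, Pi.single_eq_of_ne haj.ne, add_zero,
        Function.iterate_zero, id_eq]
      exact ih hL hjL fun i hi => h i (List.mem_cons_of_mem a hi)

end IteratedFoldr

section PartialDerivatives
variable {n : ℕ}

lemma pdMulti_zero (f : En n → ℂ) : pdMulti 0 f = f :=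
  foldr_iterate_zero _ f _

lemma pdMulti_add_single (f : En n → ℂ) {γ : Fin n → ℕ} {j : Fin n} (h : ∀ i < j, γ i = 0) :
    pdMulti (γ + Pi.single j 1) f = pdVec (esingle j) (pdMulti γ f) :=
  foldr_iterate_add_single _ f (List.pairwise_lt_finRange n) (List.mem_finRange j)
    fun i _ hi => h i hi

lemma sum_smul_esingle (v : En n) : ∑ j, v j • esingle j = v := by
  simpa [esingle] using (EuclideanSpace.basisFun (Fin n) ℝ).sum_repr v

lemma clm_eq_sum_smulRight (L : En n →L[ℝ] ℂ) :
    L = ∑ j, (EuclideanSpace.proj j : En n →L[ℝ] ℝ).smulRight (L (esingle j)) := by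
  ext v
  conv_lhs => rw [← sum_smul_esingle v]
  simp [map_sum, map_smul]

lemma sum_smulRight_apply_esingle (h : Fin n → ℂ) (j : Fin n) :
    (∑ i, (EuclideanSpace.proj i : En n →L[ℝ] ℝ).smulRight (h i)) (esingle j) = h j := by
  simp [esingle]

lemma norm_clm_le_of_forall_esingle (L : En n →L[ℝ] ℂ) {c : ℝ}
    (h : ∀ j, ‖L (esingle j)‖ ≤ c) : ‖L‖ ≤ n * c := by
  have hproj : ∀ j : Fin n, ‖(EuclideanSpace.proj j : En n →L[ℝ] ℝ)‖ ≤ 1 := fun j =>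
    ContinuousLinearMap.opNorm_le_bound _ zero_le_one fun v => by
      simpa using PiLp.norm_apply_le v j
  calc ‖L‖ ≤ ∑ j, ‖(EuclideanSpace.proj j : En n →L[ℝ] ℝ).smulRight (L (esingle j))‖ := by
        conv_lhs => rw [clm_eq_sum_smulRight L]
        exact norm_sum_le _ _
    _ ≤ ∑ _j : Fin n, c := Finset.sum_le_sum fun j _ => by
        rw [ContinuousLinearMap.norm_smulRight_apply]
        simpa using mul_le_mul (hproj j) (h j) (norm_nonneg _) zero_le_one
    _ = n * c := by simp

lemma differentiable_fderiv_of_pdVec {g : En n → ℂ}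
    (h : ∀ j, Differentiable ℝ (pdVec (esingle j) g)) : Differentiable ℝ (fderiv ℝ g) := by
  rw [funext fun x => clm_eq_sum_smulRight (fderiv ℝ g x)]
  exact Differentiable.fun_sum fun j _ =>
    (ContinuousLinearMap.smulRightL ℝ (En n) ℂ _).differentiable.comp (h j)

lemma pdVec_comm {g : En n → ℂ} (hg : Differentiable ℝ g)
    (h : ∀ j, Differentiable ℝ (pdVec (esingle j) g)) (v w : En n) :
    pdVec v (pdVec w g) = pdVec w (pdVec v g) := by
  have hg' := differentiable_fderiv_of_pdVec h
  have hsecond : ∀ u u' x, pdVec u (pdVec u' g) x = fderiv ℝ (fderiv ℝ g) x u u' := fun u u' x =>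
    congrArg (· u)
      (((ContinuousLinearMap.apply ℝ ℂ u').hasFDerivAt).comp x (hg' x).hasFDerivAt).fderiv
  funext x
  rw [hsecond, hsecond]
  exact second_derivative_symmetric (fun y => (hg y).hasFDerivAt) (hg' x).hasFDerivAt v w

lemma pdVec_pdMulti {K : ℕ} {f : En n → ℂ}
    (hf : ∀ δ : Fin n → ℕ, mdeg δ ≤ K → Differentiable ℝ (pdMulti δ f)) (γ : Fin n → ℕ)
    (hγ : mdeg γ ≤ K) (i : Fin n) :
    pdVec (esingle i) (pdMulti γ f) = pdMulti (γ + Pi.single i 1) f := by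
  induction γ using MultiIndex.induction generalizing i with
  | zero => simpa using (pdMulti_add_single f (γ := 0) (j := i) fun _ _ => rfl).symm
  | add_single γ j hmin ih =>
    rw [mdeg_add_single] at hγ
    rcases le_or_gt i j with hij | hji
    · refine (pdMulti_add_single f fun k hk => ?_).symm
      simp [hmin k (hk.trans_le hij), Pi.single_eq_of_ne (hk.trans_le hij).ne]
    · have hpart : ∀ k, pdVec (esingle k) (pdMulti γ f) = pdMulti (γ + Pi.single k 1) f :=
        ih (by omega)
      have hmin' : ∀ k < j, (γ + Pi.single i 1 : Fin n → ℕ) k = 0 := fun k hk => by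
        simp [hmin k hk, Pi.single_eq_of_ne (hk.trans hji).ne]
      have hdiff : ∀ k, Differentiable ℝ (pdVec (esingle k) (pdMulti γ f)) := fun k => by
        rw [hpart]
        exact hf _ (by rw [mdeg_add_single]; omega)
      rw [pdMulti_add_single f hmin, pdVec_comm (hf γ (by omega)) hdiff, hpart,
        ← pdMulti_add_single f hmin', add_right_comm]

end PartialDerivatives

section UniformLimits
variable {n : ℕ}

lemma tendstoLocallyUniformly_fderiv_of_pdVec {f : ℕ → En n → ℂ} {h : Fin n → En n → ℂ}
    (hh : ∀ j, TendstoLocallyUniformly (fun l => pdVec (esingle j) (f l)) (h j) atTop) :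
    TendstoLocallyUniformly (fun l => fderiv ℝ (f l))
      (fun x => ∑ j, (EuclideanSpace.proj j : En n →L[ℝ] ℝ).smulRight (h j x)) atTop := by
  rw [tendstoLocallyUniformly_iff_forall_isCompact]
  intro K hK
  rw [Metric.tendstoUniformlyOn_iff]
  intro ε hε
  have hj : ∀ᶠ l in atTop, ∀ j, ∀ y ∈ K,
      dist (h j y) (pdVec (esingle j) (f l) y) < ε / (n + 1) :=
    eventually_all.mpr fun j => Metric.tendstoUniformlyOn_iff.mp
      (tendstoLocallyUniformly_iff_forall_isCompact.mp (hh j) K hK) _ (by positivity)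
  filter_upwards [hj] with l hl y hy
  have hsmall : (n : ℝ) * (ε / (n + 1)) < ε := by
    rw [← mul_div_assoc, div_lt_iff₀ (by positivity)]
    linarith
  refine lt_of_le_of_lt ?_ hsmall
  rw [dist_eq_norm]
  refine norm_clm_le_of_forall_esingle _ fun j => ?_
  rw [sub_apply, sum_smulRight_apply_esingle, ← dist_eq_norm]
  exact (hl j y hy).le

lemma differentiable_of_tendstoLocallyUniformly_pdVec {f : ℕ → En n → ℂ} {g : En n → ℂ}
    {h : Fin n → En n → ℂ} (hf : ∀ l, Differentiable ℝ (f l))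
    (hfg : ∀ x, Tendsto (fun l => f l x) atTop (𝓝 (g x)))
    (hh : ∀ j, TendstoLocallyUniformly (fun l => pdVec (esingle j) (f l)) (h j) atTop) :
    Differentiable ℝ g ∧ ∀ j, pdVec (esingle j) g = h j := by
  have H : ∀ x, HasFDerivAt g
      (∑ j, (EuclideanSpace.proj j : En n →L[ℝ] ℝ).smulRight (h j x)) x := fun x =>
    hasFDerivAt_of_tendstoLocallyUniformlyOn isOpen_univ
      (tendstoLocallyUniformly_fderiv_of_pdVec hh).tendstoLocallyUniformlyOn
      (fun l y _ => (hf l y).hasFDerivAt) (fun y _ => hfg y) (Set.mem_univ x)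
  refine ⟨fun x => (H x).differentiableAt, fun j => funext fun x => ?_⟩
  rw [pdVec, (H x).fderiv, sum_smulRight_apply_esingle]

lemma pdMulti_of_tendstoLocallyUniformly (A : ℕ∞) {F : ℕ → En n → ℂ}
    {G : (Fin n → ℕ) → En n → ℂ}
    (hF : ∀ l γ, ((mdeg γ + 1 : ℕ) : ℕ∞) ≤ A → Differentiable ℝ (pdMulti γ (F l)))
    (hG : ∀ γ, ((mdeg γ : ℕ) : ℕ∞) ≤ A →
      TendstoLocallyUniformly (fun l => pdMulti γ (F l)) (G γ) atTop) :
    (∀ γ, ((mdeg γ : ℕ) : ℕ∞) ≤ A → pdMulti γ (G 0) = G γ) ∧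
    (∀ γ, ((mdeg γ + 1 : ℕ) : ℕ∞) ≤ A → Differentiable ℝ (pdMulti γ (G 0))) := by
  have hle : ∀ {a : ℕ}, ((a + 1 : ℕ) : ℕ∞) ≤ A → ((a : ℕ) : ℕ∞) ≤ A := fun h =>
    (Nat.cast_le.mpr (Nat.le_succ _)).trans h
  have step : ∀ γ, ((mdeg γ + 1 : ℕ) : ℕ∞) ≤ A →
      Differentiable ℝ (G γ) ∧ ∀ j, pdVec (esingle j) (G γ) = G (γ + Pi.single j 1) := by
    intro γ hγ
    refine differentiable_of_tendstoLocallyUniformly_pdVec (fun l => hF l γ hγ)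
      (fun x => (hG γ (hle hγ)).tendstoLocallyUniformlyOn.tendsto_at (Set.mem_univ x))
      fun j => ?_
    have hcomm : ∀ l, pdVec (esingle j) (pdMulti γ (F l)) = pdMulti (γ + Pi.single j 1) (F l) :=
      fun l => pdVec_pdMulti (fun δ hδ => hF l δ ((Nat.cast_le.mpr (by omega)).trans hγ)) γ
        le_rfl j
    simp only [hcomm]
    exact hG _ (by rwa [mdeg_add_single])
  have main : ∀ γ, ((mdeg γ : ℕ) : ℕ∞) ≤ A → pdMulti γ (G 0) = G γ := by
    intro γ
    induction γ using MultiIndex.induction with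
    | zero => exact fun _ => pdMulti_zero _
    | add_single γ j hmin ih =>
      intro hγ
      rw [mdeg_add_single] at hγ
      rw [pdMulti_add_single _ hmin, ih (hle hγ), (step γ hγ).2 j]
  exact ⟨main, fun γ hγ => main γ (hle hγ) ▸ (step γ hγ).1⟩

end UniformLimits

section Compactness

lemma norm_sub_le_rpow_of_lipschitz_of_bounded {V : Type*} [SeminormedAddCommGroup V]
    {f : V → ℂ} {s L B : ℝ} (hs0 : 0 < s) (hs1 : s ≤ 1) (hL : 0 ≤ L) (hB : 0 ≤ B)
    (hlip : ∀ z w, ‖f z - f w‖ ≤ L * ‖z - w‖) (hbdd : ∀ z, ‖f z‖ ≤ B) (z w : V) :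
    ‖f z - f w‖ ≤ (L + 2 * B) * ‖z - w‖ ^ s := by
  have ht : 0 ≤ ‖z - w‖ ^ s := by positivity
  rcases le_total ‖z - w‖ 1 with h1 | h1
  · have hle : ‖z - w‖ ≤ ‖z - w‖ ^ s := by
      simpa using Real.rpow_le_rpow_of_exponent_ge' (norm_nonneg _) h1 hs0.le hs1
    nlinarith [hlip z w, mul_le_mul_of_nonneg_left hle hL]
  · have hge : 1 ≤ ‖z - w‖ ^ s := Real.one_le_rpow h1 hs0.le
    nlinarith [norm_sub_le (f z) (f w), hbdd z, hbdd w]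

lemma uniformEquicontinuous_of_holder {ι X α : Type*} [PseudoMetricSpace X] [PseudoMetricSpace α]
    {F : ι → X → α} {c s : ℝ} (hs : 0 < s) (hF : ∀ i x y, dist (F i x) (F i y) ≤ c * dist x y ^ s) :
    UniformEquicontinuous F := by
  refine Metric.uniformEquicontinuous_of_continuity_modulus (fun t => c * t ^ s) ?_ F
    fun x y i => hF i x y
  simpa [Real.zero_rpow hs.ne'] using
    ((Real.continuous_rpow_const hs.le).const_mul c).tendsto 0

lemma Equicontinuous.cauchySeq_of_dense {X α : Type*} [TopologicalSpace X] [PseudoMetricSpace α]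
    {F : ℕ → X → α} (hF : Equicontinuous F) {D : Set X} (hD : Dense D)
    (h : ∀ d ∈ D, CauchySeq fun l => F l d) (x : X) : CauchySeq fun l => F l x := by
  rw [Metric.cauchySeq_iff]
  intro ε hε
  obtain ⟨d, hd, hdD⟩ :=
    ((Metric.equicontinuousAt_iff_right.mp (hF x) (ε / 3) (by positivity)).and_frequently
      (mem_closure_iff_frequently.mp (hD x))).exists
  obtain ⟨N, hN⟩ := Metric.cauchySeq_iff.mp (h d hdD) (ε / 3) (by positivity)
  refine ⟨N, fun k hk l hl => ?_⟩
  calc dist (F k x) (F l x) ≤ dist (F k x) (F k d) + dist (F k d) (F l d) + dist (F l d) (F l x) :=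
        dist_triangle4 _ _ _ _
    _ < ε / 3 + ε / 3 + ε / 3 := by
        gcongr
        · exact hd k
        · exact hN k hk l hl
        · rw [dist_comm]; exact hd l
    _ = ε := by ring

lemma Equicontinuous.tendstoLocallyUniformly_of_tendsto {ι X α : Type*} [TopologicalSpace X]
    [LocallyCompactSpace X] [UniformSpace α] {F : ι → X → α} {f : X → α} {l : Filter ι}
    (hF : Equicontinuous F) (h : ∀ x, Tendsto (F · x) l (𝓝 (f x))) :
    TendstoLocallyUniformly F f l := by
  have hcover : ⋃₀ {K : Set X | IsCompact K} = Set.univ :=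
    Set.sUnion_eq_univ_iff.mpr fun x => ⟨{x}, isCompact_singleton, rfl⟩
  have := (EquicontinuousOn.tendsto_uniformOnFun_iff_pi (fun K hK => hK) hcover
    (fun K _ => hF.equicontinuousOn K) l f).mpr (tendsto_pi_nhds.mpr h)
  exact tendstoLocallyUniformly_iff_forall_isCompact.mpr fun K hK =>
    UniformOnFun.tendsto_iff_tendstoUniformlyOn.mp this K hK

lemma exists_strictMono_tendsto_of_norm_le {J : Type*} [Countable J] (Φ : ℕ → J → ℂ)
    {R : J → ℝ} (h : ∀ l j, ‖Φ l j‖ ≤ R j) :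
    ∃ φ : ℕ → ℕ, StrictMono φ ∧ ∀ j, ∃ c, Tendsto (fun l => Φ (φ l) j) atTop (𝓝 c) := by
  obtain ⟨c, -, φ, hφ, hc⟩ :=
    (isCompact_univ_pi fun j => isCompact_closedBall (0 : ℂ) (R j)).tendsto_subseq (x := Φ)
      fun l => Set.mem_univ_pi.mpr fun j => mem_closedBall_zero_iff.mpr (h l j)
  exact ⟨φ, hφ, fun j => ⟨c j, tendsto_pi_nhds.mp hc j⟩⟩

end Compactness

section Calculus
variable {n : ℕ}

lemma pdVec_intervalIntegral {F : En n → ℝ → ℂ} {B a b : ℝ}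
    (hF : ∀ τ, Differentiable ℝ fun x => F x τ) (hFc : ∀ x, Continuous (F x))
    (hF'c : ∀ x j, Continuous fun τ => pdVec (esingle j) (fun y => F y τ) x)
    (hbound : ∀ x τ, ‖fderiv ℝ (fun y => F y τ) x‖ ≤ B) (v x : En n) :
    pdVec v (fun y => ∫ τ in a..b, F y τ) x = ∫ τ in a..b, pdVec v (fun y => F y τ) x := by
  have hcont : Continuous fun τ => fderiv ℝ (fun y => F y τ) x := by
    rw [funext fun τ => clm_eq_sum_smulRight (fderiv ℝ (fun y => F y τ) x)]
    exact continuous_finsetSum _ fun j _ =>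
      (ContinuousLinearMap.smulRightL ℝ (En n) ℂ _).continuous.comp (hF'c x j)
  have hderiv : HasFDerivAt (fun y => ∫ τ in a..b, F y τ)
      (∫ τ in a..b, fderiv ℝ (fun y => F y τ) x) x :=
    intervalIntegral.hasFDerivAt_integral_of_dominated_of_fderiv_le (bound := fun _ => B)
      Filter.univ_mem (Eventually.of_forall fun y => (hFc y).aestronglyMeasurable)
      ((hFc x).intervalIntegrable a b) hcont.aestronglyMeasurable
      (Eventually.of_forall fun τ _ y _ => hbound y τ) intervalIntegrable_const
      (Eventually.of_forall fun τ _ y _ => (hF τ y).hasFDerivAt)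
  rw [pdVec, hderiv.fderiv,
    ContinuousLinearMap.intervalIntegral_apply (hcont.intervalIntegrable a b)]
  rfl

lemma norm_sub_le_of_forall_esingle {f : En n → ℂ} {c : Fin n → ℝ} (hc : ∀ i, 0 ≤ c i)
    (h : ∀ w i (t : ℝ), ‖f (w + t • esingle i) - f w‖ ≤ c i * |t|) (ξ η : En n) :
    ‖f ξ - f η‖ ≤ (∑ i, c i) * ‖ξ - η‖ := by
  have key : ∀ S : Finset (Fin n),
      ‖f (η + ∑ i ∈ S, (ξ - η) i • esingle i) - f η‖ ≤ ∑ i ∈ S, c i * |(ξ - η) i| := by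
    intro S
    induction S using Finset.induction_on with
    | empty => simp
    | insert a S ha ih =>
      rw [Finset.sum_insert ha, Finset.sum_insert ha, ← add_assoc, add_right_comm]
      exact (norm_sub_le_norm_sub_add_norm_sub _ _ _).trans (add_le_add (h _ a _) ih)
  calc ‖f ξ - f η‖ ≤ ∑ i, c i * |(ξ - η) i| := by
        have := key Finset.univ
        rwa [sum_smul_esingle, add_sub_cancel] at this
    _ ≤ ∑ i, c i * ‖ξ - η‖ := Finset.sum_le_sum fun i _ =>
        mul_le_mul_of_nonneg_left (by simpa using PiLp.norm_apply_le (ξ - η) i) (hc i)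
    _ = (∑ i, c i) * ‖ξ - η‖ := (Finset.sum_mul _ _ _).symm

end Calculus

section Symbols
variable {n m : ℕ} {s : ℝ} {M : ℕ∞} {p : En n → En n → ℂ} {C : (Fin n → ℕ) → ℝ}

lemma mixD_zero (α : Fin n → ℕ) (p : En n → En n → ℂ) : mixD α 0 p = dXi α p := by
  funext x ξ
  exact congrFun (pdMulti_zero _) x

lemma mixD_add_single (α : Fin n → ℕ) (p : En n → En n → ℂ) {β : Fin n → ℕ} {j : Fin n}
    (h : ∀ i < j, β i = 0) (x ξ : En n) :
    mixD α (β + Pi.single j 1) p x ξ = pdVec (esingle j) (fun x => mixD α β p x ξ) x :=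
  congrFun (pdMulti_add_single _ h) x

namespace SymWC

lemma norm_mixD_le (hp : SymWC n m s 0 0 M p C) {α β : Fin n → ℕ}
    (hα : ((mdeg α : ℕ) : ℕ∞) ≤ M) (hβ : mdeg β ≤ m) (x ξ : En n) : ‖mixD α β p x ξ‖ ≤ C α := by
  simpa using (hp.2.2.2 α hα).1 β hβ x ξ

lemma nonneg (hp : SymWC n m s 0 0 M p C) {α : Fin n → ℕ} (hα : ((mdeg α : ℕ) : ℕ∞) ≤ M) :
    0 ≤ C α :=
  (norm_nonneg _).trans (hp.norm_mixD_le hα (β := 0) (by simp [mdeg_zero]) 0 0)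

lemma holder_mixD_x_of_eq (hp : SymWC n m s 0 0 M p C) {α β : Fin n → ℕ}
    (hα : ((mdeg α : ℕ) : ℕ∞) ≤ M) (hβ : mdeg β = m) (x y ξ : En n) :
    ‖mixD α β p x ξ - mixD α β p y ξ‖ ≤ C α * ‖x - y‖ ^ s := by
  simpa using (hp.2.2.2 α hα).2 β hβ x y ξ

lemma continuous_mixD_line (hp : SymWC n m s 0 0 M p C) {α β : Fin n → ℕ}
    (hα : ((mdeg α : ℕ) : ℕ∞) ≤ M) (hβ : mdeg β ≤ m) (x ξ v : En n) :
    Continuous fun τ : ℝ => mixD α β p x (ξ + τ • v) :=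
  (hp.2.2.1 α β hα hβ).comp (f := fun τ : ℝ => (x, ξ + τ • v)) (by fun_prop)

lemma pdVec_dXi (hp : SymWC n m s 0 0 M p C) {α : Fin n → ℕ}
    (hα : ((mdeg α + 1 : ℕ) : ℕ∞) ≤ M) (x : En n) (i : Fin n) :
    pdVec (esingle i) (dXi α p x) = dXi (α + Pi.single i 1) p x :=
  pdVec_pdMulti (fun δ hδ => hp.1 δ ((Nat.cast_le.mpr (by omega)).trans hα) x) α le_rfl i

lemma pdVec_mixD (hp : SymWC n m s 0 0 M p C) {α β : Fin n → ℕ}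
    (hα : ((mdeg α : ℕ) : ℕ∞) ≤ M) (hβ : mdeg β + 1 ≤ m) (ξ : En n) (i : Fin n) :
    pdVec (esingle i) (fun x => mixD α β p x ξ) = fun x => mixD α (β + Pi.single i 1) p x ξ :=
  pdVec_pdMulti (fun δ hδ => hp.2.1 α δ hα (by omega) ξ) β le_rfl i

lemma norm_fderiv_mixD_le (hp : SymWC n m s 0 0 M p C) {α β : Fin n → ℕ}
    (hα : ((mdeg α : ℕ) : ℕ∞) ≤ M) (hβ : mdeg β + 1 ≤ m) (ξ x : En n) :
    ‖fderiv ℝ (fun x => mixD α β p x ξ) x‖ ≤ n * C α :=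
  norm_clm_le_of_forall_esingle _ fun j => by
    rw [← pdVec, hp.pdVec_mixD hα hβ]
    exact hp.norm_mixD_le hα (by rw [mdeg_add_single]; omega) x ξ

lemma holder_mixD_x (hp : SymWC n m s 0 0 M p C) (hs0 : 0 < s) (hs1 : s ≤ 1)
    {α β : Fin n → ℕ} (hα : ((mdeg α : ℕ) : ℕ∞) ≤ M) (hβ : mdeg β ≤ m) (ξ x y : En n) :
    ‖mixD α β p x ξ - mixD α β p y ξ‖ ≤ (n + 2) * C α * ‖x - y‖ ^ s := by
  have hC := hp.nonneg hα
  rcases hβ.lt_or_eq with hβ | hβ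
  · have hlip : ∀ x y, ‖mixD α β p x ξ - mixD α β p y ξ‖ ≤ n * C α * ‖x - y‖ := fun x y =>
      Convex.norm_image_sub_le_of_norm_fderiv_le (fun z _ => hp.2.1 α β hα hβ ξ z)
        (fun z _ => hp.norm_fderiv_mixD_le hα hβ ξ z) convex_univ (Set.mem_univ y)
        (Set.mem_univ x)
    have := norm_sub_le_rpow_of_lipschitz_of_bounded (f := fun x => mixD α β p x ξ) hs0 hs1
      (by positivity) hC hlip (fun x => hp.norm_mixD_le hα hβ.le x ξ) x y
    convert this using 2
    ring
  · refine (hp.holder_mixD_x_of_eq hα hβ x y ξ).trans ?_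
    gcongr
    nlinarith [Nat.cast_nonneg (α := ℝ) n]

/-- Differentiating under the integral sign, the `x`-derivatives commute with the fundamental
theorem of calculus in `ξ`. -/
lemma mixD_sub_eq_integral (hp : SymWC n m s 0 0 M p C) {α : Fin n → ℕ}
    (hα : ((mdeg α + 1 : ℕ) : ℕ∞) ≤ M) (i : Fin n) {β : Fin n → ℕ} (hβ : mdeg β ≤ m)
    (x ξ : En n) (t : ℝ) :
    mixD α β p x (ξ + t • esingle i) - mixD α β p x ξ
      = ∫ τ in (0 : ℝ)..t, mixD (α + Pi.single i 1) β p x (ξ + τ • esingle i) := by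
  have hαM : ((mdeg α : ℕ) : ℕ∞) ≤ M := (Nat.cast_le.mpr (Nat.le_succ _)).trans hα
  have hα' : ((mdeg (α + Pi.single i 1) : ℕ) : ℕ∞) ≤ M := by rwa [mdeg_add_single]
  induction β using MultiIndex.induction generalizing x with
  | zero =>
    have hcont : Continuous fun τ : ℝ => dXi (α + Pi.single i 1) p x (ξ + τ • esingle i) := by
      simpa only [mixD_zero] using hp.continuous_mixD_line hα' hβ x ξ (esingle i)
    rw [mixD_zero, mixD_zero, intervalIntegral.integral_eq_sub_of_hasDerivAt
      (f := fun τ => dXi α p x (ξ + τ • esingle i)) (fun τ _ => ?_) (hcont.intervalIntegrable 0 t),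
      zero_smul, add_zero]
    have hline : HasDerivAt (fun τ : ℝ => ξ + τ • esingle i) (esingle i) τ := by
      simpa using ((hasDerivAt_id τ).smul_const (esingle i)).const_add ξ
    have := ((hp.1 α hα x) (ξ + τ • esingle i)).hasFDerivAt.comp_hasDerivAt τ hline
    rwa [← pdVec, hp.pdVec_dXi hα x i] at this
  | add_single β j hmin ih =>
    rw [mdeg_add_single] at hβ
    have hdiff : ∀ η, DifferentiableAt ℝ (fun x => mixD α β p x η) x := fun η =>
      hp.2.1 α β hαM hβ η x
    have hsub : mixD α (β + Pi.single j 1) p x (ξ + t • esingle i)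
        - mixD α (β + Pi.single j 1) p x ξ
        = pdVec (esingle j) (fun x => mixD α β p x (ξ + t • esingle i) - mixD α β p x ξ) x := by
      rw [mixD_add_single α p hmin, mixD_add_single α p hmin, pdVec, pdVec, pdVec,
        fderiv_fun_sub (hdiff _) (hdiff _)]
      rfl
    rw [hsub, funext fun x => ih (by omega) x,
      pdVec_intervalIntegral (B := n * C (α + Pi.single i 1))
      (fun τ => hp.2.1 _ β hα' hβ _) (fun x => hp.continuous_mixD_line hα' (by omega) x ξ _)
      (fun x k => by simpa only [hp.pdVec_mixD hα' hβ] using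
        hp.continuous_mixD_line hα' (by rw [mdeg_add_single]; omega) x ξ (esingle i))
      (fun x τ => hp.norm_fderiv_mixD_le hα' hβ _ x)]
    simp only [← mixD_add_single _ p hmin]

lemma lipschitz_mixD_xi (hp : SymWC n m s 0 0 M p C) {α β : Fin n → ℕ}
    (hα : ((mdeg α + 1 : ℕ) : ℕ∞) ≤ M) (hβ : mdeg β ≤ m) (x ξ η : En n) :
    ‖mixD α β p x ξ - mixD α β p x η‖ ≤ (∑ i, C (α + Pi.single i 1)) * ‖ξ - η‖ := by
  have hα' : ∀ i, ((mdeg (α + Pi.single i 1) : ℕ) : ℕ∞) ≤ M := fun i => by rwa [mdeg_add_single]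
  refine norm_sub_le_of_forall_esingle (fun i => hp.nonneg (hα' i)) (fun w i t => ?_) ξ η
  rw [hp.mixD_sub_eq_integral hα i hβ]
  simpa using intervalIntegral.norm_integral_le_of_norm_le_const (a := 0) (b := t)
    fun τ _ => hp.norm_mixD_le (hα' i) hβ x (w + τ • esingle i)

lemma holder_mixD (hp : SymWC n m s 0 0 M p C) (hs0 : 0 < s) (hs1 : s ≤ 1)
    {α β : Fin n → ℕ} (hα : ((mdeg α + 1 : ℕ) : ℕ∞) ≤ M) (hβ : mdeg β ≤ m)
    (z w : En n × En n) :
    ‖mixD α β p z.1 z.2 - mixD α β p w.1 w.2‖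
      ≤ ((n + 4) * C α + ∑ i, C (α + Pi.single i 1)) * ‖z - w‖ ^ s := by
  have hαM : ((mdeg α : ℕ) : ℕ∞) ≤ M := (Nat.cast_le.mpr (Nat.le_succ _)).trans hα
  have hC := hp.nonneg hαM
  have hsum : 0 ≤ ∑ i, C (α + Pi.single i 1) :=
    Finset.sum_nonneg fun i _ => hp.nonneg (by rwa [mdeg_add_single])
  have hfst : ‖z.1 - w.1‖ ^ s ≤ ‖z - w‖ ^ s := by gcongr; exact norm_fst_le (z - w)
  have hsnd : ‖z.2 - w.2‖ ^ s ≤ ‖z - w‖ ^ s := by gcongr; exact norm_snd_le (z - w)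
  have hx := hp.holder_mixD_x hs0 hs1 hαM hβ z.2 z.1 w.1
  have hξ := norm_sub_le_rpow_of_lipschitz_of_bounded (f := fun ξ => mixD α β p w.1 ξ) hs0 hs1
    hsum hC (hp.lipschitz_mixD_xi hα hβ w.1) (fun ξ => hp.norm_mixD_le hαM hβ w.1 ξ) z.2 w.2
  calc ‖mixD α β p z.1 z.2 - mixD α β p w.1 w.2‖
      ≤ ‖mixD α β p z.1 z.2 - mixD α β p w.1 z.2‖ + ‖mixD α β p w.1 z.2 - mixD α β p w.1 w.2‖ :=
        norm_sub_le_norm_sub_add_norm_sub _ _ _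
    _ ≤ (n + 2) * C α * ‖z - w‖ ^ s + (∑ i, C (α + Pi.single i 1) + 2 * C α) * ‖z - w‖ ^ s := by
        gcongr
        · exact hx.trans (by gcongr)
        · exact hξ.trans (by gcongr)
    _ = ((n + 4) * C α + ∑ i, C (α + Pi.single i 1)) * ‖z - w‖ ^ s := by ring

theorem exists_subseq_tendstoLocallyUniformly (hM : 1 ≤ M) (hs0 : 0 < s) (hs1 : s ≤ 1)
    {P : ℕ → En n → En n → ℂ} (hP : ∀ l, SymWC n m s 0 0 M (P l) C) :
    ∃ φ : ℕ → ℕ, StrictMono φ ∧ ∃ G : (Fin n → ℕ) → (Fin n → ℕ) → En n × En n → ℂ,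
      ∀ α β, ((mdeg α : ℕ) : ℕ∞) ≤ M - 1 → mdeg β ≤ m →
        TendstoLocallyUniformly (fun l (z : En n × En n) => mixD α β (P (φ l)) z.1 z.2)
          (G α β) atTop := by
  obtain ⟨u, hu⟩ := TopologicalSpace.exists_dense_seq (En n × En n)
  let Index := {αβ : (Fin n → ℕ) × (Fin n → ℕ) //
    ((mdeg αβ.1 : ℕ) : ℕ∞) ≤ M - 1 ∧ mdeg αβ.2 ≤ m}
  obtain ⟨φ, hφ, hconv⟩ := exists_strictMono_tendsto_of_norm_le (J := Index × ℕ)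
    (fun l j => mixD j.1.1.1 j.1.1.2 (P l) (u j.2).1 (u j.2).2)
    fun l j => (hP l).norm_mixD_le (j.1.2.1.trans tsub_le_self) j.1.2.2 _ _
  refine ⟨φ, hφ, fun α β z => limUnder atTop fun l => mixD α β (P (φ l)) z.1 z.2,
    fun α β hα hβ => ?_⟩
  have hequi : Equicontinuous fun l (z : En n × En n) => mixD α β (P (φ l)) z.1 z.2 :=
    (uniformEquicontinuous_of_holder hs0 fun l z w => by
      simpa only [dist_eq_norm] using
        (hP (φ l)).holder_mixD hs0 hs1 (ENat.natCast_add_one_le_of_le_sub_one hM hα) hβ z w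
      ).equicontinuous
  have hcauchy := hequi.cauchySeq_of_dense hu fun _ ⟨k, hk⟩ =>
    hk ▸ (hconv (⟨(α, β), hα, hβ⟩, k)).choose_spec.cauchySeq
  exact hequi.tendstoLocallyUniformly_of_tendsto fun z =>
    tendsto_nhds_limUnder (cauchySeq_tendsto_of_complete (hcauchy z))

lemma dXi_of_tendstoLocallyUniformly {P : ℕ → En n → En n → ℂ}
    (hP : ∀ l, SymWC n m s 0 0 M (P l) C) {G : (Fin n → ℕ) → (Fin n → ℕ) → En n × En n → ℂ}
    (hG : ∀ α β, ((mdeg α : ℕ) : ℕ∞) ≤ M - 1 → mdeg β ≤ m →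
      TendstoLocallyUniformly (fun l (z : En n × En n) => mixD α β (P l) z.1 z.2) (G α β) atTop)
    (x : En n) :
    (∀ α, ((mdeg α : ℕ) : ℕ∞) ≤ M - 1 →
      dXi α (fun x ξ => G 0 0 (x, ξ)) x = fun ξ => G α 0 (x, ξ)) ∧
    ∀ α, ((mdeg α + 1 : ℕ) : ℕ∞) ≤ M - 1 →
      Differentiable ℝ (dXi α (fun x ξ => G 0 0 (x, ξ)) x) :=
  pdMulti_of_tendstoLocallyUniformly (M - 1) (F := fun l => P l x) (G := fun α ξ => G α 0 (x, ξ))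
    (fun l α hα => (hP l).1 α (hα.trans tsub_le_self) x) fun α hα => by
      have := (hG α 0 hα (by simp [mdeg_zero])).comp (fun ξ => (x, ξ)) (by fun_prop)
      simp only [mixD_zero] at this
      exact this

lemma dX_of_tendstoLocallyUniformly {P : ℕ → En n → En n → ℂ}
    (hP : ∀ l, SymWC n m s 0 0 M (P l) C) {G : (Fin n → ℕ) → (Fin n → ℕ) → En n × En n → ℂ}
    (hG : ∀ α β, ((mdeg α : ℕ) : ℕ∞) ≤ M - 1 → mdeg β ≤ m →
      TendstoLocallyUniformly (fun l (z : En n × En n) => mixD α β (P l) z.1 z.2) (G α β) atTop)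
    {α : Fin n → ℕ} (hα : ((mdeg α : ℕ) : ℕ∞) ≤ M - 1) (ξ : En n) :
    (∀ β, mdeg β ≤ m → pdMulti β (fun x => G α 0 (x, ξ)) = fun x => G α β (x, ξ)) ∧
    ∀ β, mdeg β + 1 ≤ m → Differentiable ℝ (pdMulti β (fun x => G α 0 (x, ξ))) := by
  have h := pdMulti_of_tendstoLocallyUniformly m (F := fun l x => dXi α (P l) x ξ)
    (G := fun β x => G α β (x, ξ))
    (fun l β hβ => (hP l).2.1 α β (hα.trans tsub_le_self) (by exact_mod_cast hβ) ξ) fun β hβ =>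
      (hG α β hα (by exact_mod_cast hβ)).comp (fun x => (x, ξ)) (by fun_prop)
  exact ⟨fun β hβ => h.1 β (by exact_mod_cast hβ), fun β hβ => h.2 β (by exact_mod_cast hβ)⟩

theorem of_tendstoLocallyUniformly {P : ℕ → En n → En n → ℂ}
    (hP : ∀ l, SymWC n m s 0 0 M (P l) C) {G : (Fin n → ℕ) → (Fin n → ℕ) → En n × En n → ℂ}
    (hG : ∀ α β, ((mdeg α : ℕ) : ℕ∞) ≤ M - 1 → mdeg β ≤ m →
      TendstoLocallyUniformly (fun l (z : En n × En n) => mixD α β (P l) z.1 z.2) (G α β) atTop) :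
    (∀ α β, ((mdeg α : ℕ) : ℕ∞) ≤ M - 1 → mdeg β ≤ m →
      (fun z : En n × En n => mixD α β (fun x ξ => G 0 0 (x, ξ)) z.1 z.2) = G α β) ∧
    SymWC n m s 0 0 (M - 1) (fun x ξ => G 0 0 (x, ξ)) C := by
  set q : En n → En n → ℂ := fun x ξ => G 0 0 (x, ξ)
  have hMle : ∀ {a : ℕ}, (a : ℕ∞) ≤ M - 1 → (a : ℕ∞) ≤ M := fun h => h.trans tsub_le_self
  have hdXi : ∀ α, ((mdeg α : ℕ) : ℕ∞) ≤ M - 1 → ∀ ξ,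
      (fun x => dXi α q x ξ) = fun x => G α 0 (x, ξ) := fun α hα ξ =>
    funext fun x => congrFun ((dXi_of_tendstoLocallyUniformly hP hG x).1 α hα) ξ
  have hq : ∀ α β, ((mdeg α : ℕ) : ℕ∞) ≤ M - 1 → mdeg β ≤ m →
      (fun z : En n × En n => mixD α β q z.1 z.2) = G α β := fun α β hα hβ => funext fun z =>
    show pdMulti β (fun x => dXi α q x z.2) z.1 = G α β z by
      rw [hdXi α hα z.2, (dX_of_tendstoLocallyUniformly hP hG hα z.2).1 β hβ]
  have hlim : ∀ α β, ((mdeg α : ℕ) : ℕ∞) ≤ M - 1 → mdeg β ≤ m → ∀ z : En n × En n,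
      Tendsto (fun l => mixD α β (P l) z.1 z.2) atTop (𝓝 (mixD α β q z.1 z.2)) :=
    fun α β hα hβ z => by
      rw [show mixD α β q z.1 z.2 = G α β z from congrFun (hq α β hα hβ) z]
      exact (hG α β hα hβ).tendstoLocallyUniformlyOn.tendsto_at (Set.mem_univ z)
  refine ⟨hq, fun α hα x => (dXi_of_tendstoLocallyUniformly hP hG x).2 α hα,
    fun α β hα hβ ξ => ?_, fun α β hα hβ => ?_,
    fun α hα => ⟨fun β hβ x ξ => ?_, fun β hβ x y ξ => ?_⟩⟩
  · have h := (dX_of_tendstoLocallyUniformly hP hG hα ξ).2 β hβ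
    rw [← hdXi α hα ξ] at h
    exact h
  · exact hq α β hα hβ ▸ (hG α β hα hβ).continuous
      (Frequently.of_forall fun l => (hP l).2.2.1 α β (hMle hα) hβ)
  · simpa using le_of_tendsto' (hlim α β hα hβ (x, ξ)).norm
      fun l => (hP l).norm_mixD_le (hMle hα) hβ x ξ
  · simpa using le_of_tendsto' ((hlim α β hα hβ.le (x, ξ)).sub (hlim α β hα hβ.le (y, ξ))).norm
      fun l => (hP l).holder_mixD_x_of_eq (hMle hα) hβ x y ξ

end SymWC

end Symbols

theorem stmt8 (n m : ℕ) (M : ℕ∞) (hM : 1 ≤ M) (s : ℝ) (hs0 : 0 < s) (hs1 : s ≤ 1)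
    (p : ℝ → En n → En n → ℂ)
    (hp : ∃ C, ∀ ε : ℝ, 0 < ε → SymWC n m s 0 0 M (p ε) C) :
    ∃ (εs : ℕ → ℝ) (q : En n → En n → ℂ),
      (∀ l, 0 < εs l) ∧ Tendsto εs atTop (𝓝 0) ∧
      (∀ α β : Fin n → ℕ, ((mdeg α : ℕ) : ℕ∞) ≤ M - 1 → mdeg β ≤ m →
        (Continuous fun z : En n × En n => mixD α β q z.1 z.2) ∧
        ∃ C : ℝ, (∀ z : En n × En n, ‖mixD α β q z.1 z.2‖ ≤ C) ∧
          ∀ z w : En n × En n,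
            ‖mixD α β q z.1 z.2 - mixD α β q w.1 w.2‖ ≤ C * ‖z - w‖ ^ s) ∧
      (∀ α β : Fin n → ℕ, ((mdeg α : ℕ) : ℕ∞) ≤ M - 1 → mdeg β ≤ m →
        ∀ K : Set (En n × En n), IsCompact K →
          TendstoUniformlyOn (fun l (z : En n × En n) => mixD α β (p (εs l)) z.1 z.2)
            (fun z : En n × En n => mixD α β q z.1 z.2) atTop K) ∧
      SymClass n m s 0 0 (M - 1) q := by
  obtain ⟨C, hC⟩ := hp
  obtain ⟨φ, hφ, G, hG⟩ := SymWC.exists_subseq_tendstoLocallyUniformly hM hs0 hs1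
    (P := fun l => p (1 / (l + 1))) fun l => hC _ Nat.one_div_pos_of_nat
  have hP : ∀ l, SymWC n m s 0 0 M (p (1 / (φ l + 1))) C := fun l => hC _ Nat.one_div_pos_of_nat
  obtain ⟨hq, hsym⟩ := SymWC.of_tendstoLocallyUniformly hP hG
  refine ⟨fun l => 1 / (φ l + 1), fun x ξ => G 0 0 (x, ξ), fun l => Nat.one_div_pos_of_nat,
    tendsto_one_div_add_atTop_nhds_zero_nat.comp hφ.tendsto_atTop, fun α β hα hβ => ?_,
    fun α β hα hβ => ?_, C, hsym⟩
  · have hlim := fun z => (hG α β hα hβ).tendstoLocallyUniformlyOn.tendsto_at (Set.mem_univ z)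
    set K := (n + 4) * C α + ∑ i, C (α + Pi.single i 1)
    refine ⟨hsym.2.2.1 α β hα hβ, max (C α) K,
      fun z => (hsym.norm_mixD_le hα hβ z.1 z.2).trans (le_max_left _ _), fun z w => ?_⟩
    rw [congrFun (hq α β hα hβ) z, congrFun (hq α β hα hβ) w]
    refine (le_of_tendsto' ((hlim z).sub (hlim w)).norm fun l =>
      (hP l).holder_mixD hs0 hs1 (ENat.natCast_add_one_le_of_le_sub_one hM hα) hβ z w).trans ?_
    gcongr
    exact le_max_right _ _
  · rw [hq α β hα hβ]
    exact tendstoLocallyUniformly_iff_forall_isCompact.mp (hG α β hα hβ)
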